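/- Let G₁ and G₂ be two digraphs on the same finite node set that commute (as Boolean matrices: there is a walk i →_{G₁} k →_{G₂} j if and only if there is a walk i →_{G₂} k' →_{G₁} j, i.e., A₁A₂ = A₂A₁ over the Boolean semiring) and suppose every node has outdegree at least 1 in each graph. Then there exists a cycle in G₁ all of whose nodes belong to the union of the node sets of the nontrivial strongly connected components of G₂. -/
import Mathlib


/-- Two digraphs commute (as Boolean matrices). -/
def DigraphCommute {n : ℕ} (G₁ G₂ : Fin n → Fin n → Prop) : Prop :=
  ∀ i j, (∃ k, G₁ i k ∧ G₂ k j) ↔ (∃ k, G₂ i k ∧ G₁ k j)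

/-- A node lies on a cycle of `G` (equivalently, belongs to a nontrivial strongly connected
component of `G`). -/
def OnCycle {n : ℕ} (G : Fin n → Fin n → Prop) (u : Fin n) : Prop :=
  ∃ (m : ℕ) (c : Fin (m+1) → Fin n), (∀ i, G (c i) (c (i + 1))) ∧ ∃ i, c i = u

namespace KSS

variable {n : ℕ}

def W (G : Fin n → Fin n → Prop) : ℕ → Fin n → Fin n → Prop
  | 0, i, j => i = j
  | k+1, i, j => ∃ m, G i m ∧ W G k m j

lemma W_trans {G : Fin n → Fin n → Prop} :
    ∀ {p q : ℕ} {i j k : Fin n}, W G p i j → W G q j k → W G (p + q) i k := by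
  intro p
  induction p with
  | zero => intro q i j k h1 h2; simp [W] at h1; subst h1; simpa using h2
  | succ p ih =>
    intro q i j k h1 h2
    obtain ⟨m, him, hm⟩ := h1
    have : W G (p + q) m k := ih hm h2
    have h3 : p + 1 + q = (p + q) + 1 := by omega
    rw [h3]
    exact ⟨m, him, this⟩

lemma comm_shift {G₁ G₂ : Fin n → Fin n → Prop} (hcomm : DigraphCommute G₁ G₂) :
    ∀ {k : ℕ} {i j v : Fin n}, W G₂ k i j → G₁ j v → ∃ w, G₁ i w ∧ W G₂ k w v := by
  intro k
  induction k with
  | zero => intro i j v h1 h2; simp [W] at h1 ⊢; subst h1; exact h2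
  | succ k ih =>
    intro i j v h1 h2
    obtain ⟨m, him, hm⟩ := h1
    obtain ⟨w', hw'1, hw'2⟩ := ih hm h2
    obtain ⟨w, hw1, hw2⟩ := (hcomm i w').2 ⟨m, him, hw'1⟩
    exact ⟨w, hw1, w', hw2, hw'2⟩

lemma W_toFun {G : Fin n → Fin n → Prop} :
    ∀ {k : ℕ} {i j : Fin n}, W G k i j →
      ∃ f : ℕ → Fin n, f 0 = i ∧ f k = j ∧ ∀ t < k, G (f t) (f (t+1)) := by
  intro k
  induction k with
  | zero => intro i j h; exact ⟨fun _ => i, rfl, h ▸ rfl, by omega⟩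
  | succ k ih =>
    intro i j h
    obtain ⟨m, him, hm⟩ := h
    obtain ⟨f, hf0, hfk, hfe⟩ := ih hm
    refine ⟨fun t => if t = 0 then i else f (t - 1), by simp, by simp [hfk], ?_⟩
    intro t ht
    rcases Nat.eq_zero_or_pos t with h0 | h0
    · subst h0; simpa [hf0] using him
    · have h1 : t ≠ 0 := h0.ne'
      simp only [h1, if_neg, ite_false]
      have : t - 1 < k := by omega
      have := hfe (t-1) this
      have ht1 : t - 1 + 1 = t := by omega
      rw [ht1] at this
      simpa [h1] using this

lemma onCycle_of_W {G : Fin n → Fin n → Prop} {u : Fin n} {L : ℕ}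
    (hL : 1 ≤ L) (h : W G L u u) : OnCycle G u := by
  obtain ⟨m, rfl⟩ : ∃ m, L = m + 1 := ⟨L - 1, by omega⟩
  obtain ⟨f, hf0, hfk, hfe⟩ := W_toFun h
  refine ⟨m, fun i => f i.val, ?_, ⟨0, by simpa using hf0⟩⟩
  intro i
  rcases eq_or_ne i (Fin.last m) with hlast | hlast
  · subst hlast
    have : (Fin.last m + 1 : Fin (m+1)) = 0 := by
      simp
    rw [this]
    simp only [Fin.val_last, Fin.val_zero, hf0]
    have h2 := hfe m (by omega)
    rwa [hfk] at h2
  · have hv : ((i + 1 : Fin (m+1)) : ℕ) = i.val + 1 := by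
      rw [Fin.val_add_one]
      simp [hlast]
    simp only []
    rw [hv]
    exact hfe i.val (by have := i.isLt; have : i.val ≠ m := fun h => hlast (Fin.ext h); omega)

/-- the set of nodes on a G-cycle, phrased via W -/
def InS (G : Fin n → Fin n → Prop) (u : Fin n) : Prop := ∃ L, 1 ≤ L ∧ W G L u u

lemma InS.onCycle {G : Fin n → Fin n → Prop} {u : Fin n} (h : InS G u) : OnCycle G u := by
  obtain ⟨L, hL, hw⟩ := h; exact onCycle_of_W hL hw

lemma exists_InS {G : Fin n → Fin n → Prop} (hout : ∀ i, ∃ j, G i j) (hn : 0 < n) :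
    ∃ u, InS G u := by
  -- iterate a successor function
  choose s hs using hout
  set x0 : Fin n := ⟨0, hn⟩
  have hiter : ∀ t : ℕ, W G t x0 (s^[t] x0) := by
    intro t
    induction t with
    | zero => simp [W, Function.iterate_zero]
    | succ t ih =>
      have : W G (t + 1) x0 (s^[t+1] x0) := by
        have := W_trans ih (show W G 1 (s^[t] x0) (s (s^[t] x0)) from ⟨_, hs _, rfl⟩)
        simpa [Function.iterate_succ_apply'] using this
      exact this
  have : ∃ a b : Fin (n+1), a ≠ b ∧ s^[a.val] x0 = s^[b.val] x0 := by
    have hcard : Fintype.card (Fin n) < Fintype.card (Fin (n+1)) := by simp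
    obtain ⟨a, b, hab, h⟩ := Fintype.exists_ne_map_eq_of_card_lt
      (fun t : Fin (n+1) => s^[t.val] x0) hcard
    exact ⟨a, b, hab, h⟩
  obtain ⟨a, b, hab, heq⟩ := this
  wlog hlt : a.val < b.val generalizing a b
  · exact this b a hab.symm heq.symm (by have : a.val ≠ b.val := fun h => hab (Fin.ext h); omega)
  · refine ⟨s^[a.val] x0, b.val - a.val, by omega, ?_⟩
    have : W G (b.val - a.val) (s^[a.val] x0) (s^[b.val] x0) := by
      have h1 : s^[b.val] x0 = s^[b.val - a.val] (s^[a.val] x0) := by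
        rw [← Function.iterate_add_apply]
        congr 1
        omega
      rw [h1]
      generalize s^[a.val] x0 = y
      clear heq
      induction (b.val - a.val) with
      | zero => simp [W]
      | succ d ih =>
        have := W_trans ih (show W G 1 (s^[d] y) (s (s^[d] y)) from ⟨_, hs _, rfl⟩)
        simpa [Function.iterate_succ_apply'] using this
    rwa [← heq] at this


lemma InS_step {G₁ G₂ : Fin n → Fin n → Prop} (hcomm : DigraphCommute G₁ G₂)
    (hout₁ : ∀ i, ∃ j, G₁ i j) {u : Fin n} (hu : InS G₂ u) :
    ∃ w, G₁ u w ∧ InS G₂ w := by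
  obtain ⟨L, hL, hw⟩ := hu
  have hstep : ∀ w : {w // G₁ u w}, ∃ w' : {w // G₁ u w}, W G₂ L w'.val w.val := by
    rintro ⟨w, hw1⟩
    obtain ⟨w', hw'1, hw'2⟩ := comm_shift hcomm hw hw1
    exact ⟨⟨w', hw'1⟩, hw'2⟩
  choose g hg using hstep
  obtain ⟨w0v, hw0⟩ := hout₁ u
  set w₀ : {w // G₁ u w} := ⟨w0v, hw0⟩
  have hchain : ∀ (d : ℕ) (x : {w // G₁ u w}), W G₂ (d * L) (g^[d] x).val x.val := by
    intro d
    induction d with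
    | zero => intro x; simp [W]
    | succ d ih =>
      intro x
      have h1 : g^[d+1] x = g (g^[d] x) := Function.iterate_succ_apply' g d x
      have h2 : W G₂ L (g (g^[d] x)).val (g^[d] x).val := hg _
      have h3 := W_trans h2 (ih x)
      have h4 : L + d * L = (d + 1) * L := by ring
      rw [h1]
      rwa [h4] at h3
  have : ∃ a b : Fin (n+1), a ≠ b ∧ (g^[a.val] w₀).val = (g^[b.val] w₀).val := by
    have hcard : Fintype.card (Fin n) < Fintype.card (Fin (n+1)) := by simp
    obtain ⟨a, b, hab, h⟩ := Fintype.exists_ne_map_eq_of_card_lt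
      (fun t : Fin (n+1) => (g^[t.val] w₀).val) hcard
    exact ⟨a, b, hab, h⟩
  obtain ⟨a, b, hab, heq⟩ := this
  wlog hlt : a.val < b.val generalizing a b
  · exact this b a hab.symm heq.symm
      (by have : a.val ≠ b.val := fun h => hab (Fin.ext h); omega)
  have heq' : g^[a.val] w₀ = g^[b.val] w₀ := Subtype.ext heq
  refine ⟨(g^[a.val] w₀).val, (g^[a.val] w₀).2, (b.val - a.val) * L, ?_, ?_⟩
  · have : 1 ≤ b.val - a.val := by omega
    exact Nat.one_le_iff_ne_zero.mpr (by positivity)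
  · have h5 := hchain (b.val - a.val) (g^[a.val] w₀)
    rw [← Function.iterate_add_apply] at h5
    have h6 : b.val - a.val + a.val = b.val := by omega
    rw [h6, ← heq'] at h5
    exact h5

end KSS

/-- Katz–Schneider–Sergeev: if `G₁`, `G₂` commute and every node has an outgoing edge in each,
then `G₁` has a cycle all of whose nodes belong to nontrivial strongly connected components
of `G₂`. -/
theorem commuting_digraphs_cycle {n : ℕ} (G₁ G₂ : Fin n → Fin n → Prop)
    (hcomm : DigraphCommute G₁ G₂)
    (hout₁ : ∀ i, ∃ j, G₁ i j) (hout₂ : ∀ i, ∃ j, G₂ i j) (hn : 0 < n) :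
    ∃ (m : ℕ) (c : Fin (m+1) → Fin n),
      (∀ i, G₁ (c i) (c (i + 1))) ∧ ∀ i, OnCycle G₂ (c i) := by
  classical
  obtain ⟨u0, hu0⟩ := KSS.exists_InS hout₂ hn
  have hstep : ∀ u : {u // KSS.InS G₂ u}, ∃ w : {u // KSS.InS G₂ u}, G₁ u.val w.val := by
    rintro ⟨u, hu⟩
    obtain ⟨w, hw1, hw2⟩ := KSS.InS_step hcomm hout₁ hu
    exact ⟨⟨w, hw2⟩, hw1⟩
  choose φ hφ using hstep
  set U₀ : {u // KSS.InS G₂ u} := ⟨u0, hu0⟩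
  have : ∃ a b : Fin (n+1), a ≠ b ∧ (φ^[a.val] U₀).val = (φ^[b.val] U₀).val := by
    have hcard : Fintype.card (Fin n) < Fintype.card (Fin (n+1)) := by simp
    obtain ⟨a, b, hab, h⟩ := Fintype.exists_ne_map_eq_of_card_lt
      (fun t : Fin (n+1) => (φ^[t.val] U₀).val) hcard
    exact ⟨a, b, hab, h⟩
  obtain ⟨a, b, hab, heq⟩ := this
  wlog hlt : a.val < b.val generalizing a b
  · exact this b a hab.symm heq.symm
      (by have : a.val ≠ b.val := fun h => hab (Fin.ext h); omega)
  have heq' : φ^[a.val] U₀ = φ^[b.val] U₀ := Subtype.ext heq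
  set m : ℕ := b.val - a.val - 1 with hm
  refine ⟨m, fun i => (φ^[a.val + i.val] U₀).val, ?_, ?_⟩
  · intro i
    rcases eq_or_ne i (Fin.last m) with hlast | hlast
    · have h0 : (Fin.last m + 1 : Fin (m+1)) = 0 := by simp
      rw [hlast, h0]
      simp only [Fin.val_last, Fin.val_zero, Nat.add_zero]
      have hb : b.val = a.val + m + 1 := by omega
      have h1 : φ^[b.val] U₀ = φ (φ^[a.val + m] U₀) := by
        rw [hb, Function.iterate_succ_apply']
      rw [heq', h1]
      exact hφ _
    · have hv : ((i + 1 : Fin (m+1)) : ℕ) = i.val + 1 := by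
        rw [Fin.val_add_one]
        simp [hlast]
      simp only []
      rw [hv]
      have h1 : φ^[a.val + (i.val + 1)] U₀ = φ (φ^[a.val + i.val] U₀) := by
        rw [show a.val + (i.val + 1) = (a.val + i.val) + 1 by omega,
          Function.iterate_succ_apply']
      rw [h1]
      exact hφ _
  · intro i
    exact KSS.InS.onCycle (φ^[a.val + i.val] U₀).2
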